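/- arXiv:2407.14052 — 5 statements merged into one kernel-verified Lean document; each statement's English description precedes it below -/
import Mathlib

section
/- Let p > 1 and let z_1, …, z_n be non-negative real numbers. Then (∑_{j=1}^n z_j)^p − ∑_{j=1}^n z_j^p ≥ c(p,n) (∑_{j=1}^n z_j)^{p−1} · min_i ∑_{j≠i} z_j, for some constant c(p,n) > 0 depending only on p and n. -/
/-!
Let `a = z m` be the largest entry and `b = ∑_{j ≠ m} z j`, so that `∑ z = a + b`. Bernoulli's
inequality gives `(a + b)^p ≥ a^p + p a^(p-1) b`, while `z j^p ≤ a^(p-1) z j` gives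
`∑ z^p ≤ a^p + a^(p-1) b`; hence `(∑ z)^p - ∑ z^p ≥ (p - 1) a^(p-1) b`. Finally
`∑ z ≤ n a` and `min_i ∑_{j ≠ i} z j ≤ b`, so one may take `c = (p - 1) / n^(p-1)`.
-/

open Finset

theorem Real.rpow_add_mul_rpow_sub_one_mul_le_add_rpow {p a b : ℝ} (hp : 1 < p) (ha : 0 ≤ a)
    (hb : 0 ≤ b) : a ^ p + p * a ^ (p - 1) * b ≤ (a + b) ^ p := by
  rcases ha.eq_or_lt with rfl | ha
  · rw [Real.zero_rpow (by linarith), Real.zero_rpow (by linarith)]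
    simpa using Real.rpow_nonneg hb p
  have bernoulli : 1 + p * (b / a) ≤ (1 + b / a) ^ p :=
    one_add_mul_self_le_rpow_one_add (by linarith [div_nonneg hb ha.le]) hp.le
  calc a ^ p + p * a ^ (p - 1) * b = a ^ p * (1 + p * (b / a)) := by
        rw [Real.rpow_sub ha, Real.rpow_one]
        field_simp
    _ ≤ a ^ p * (1 + b / a) ^ p := by gcongr
    _ = (a + b) ^ p := by
        rw [← Real.mul_rpow ha.le (by positivity)]
        congr 1
        field_simp

theorem Finset.sum_rpow_le_rpow_sub_one_mul_sum {ι : Type*} (s : Finset ι) {z : ι → ℝ}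
    {a p : ℝ} (hp : 1 ≤ p) (hz : ∀ j ∈ s, 0 ≤ z j) (hza : ∀ j ∈ s, z j ≤ a) :
    ∑ j ∈ s, z j ^ p ≤ a ^ (p - 1) * ∑ j ∈ s, z j := by
  rw [mul_sum]
  refine sum_le_sum fun j hj => ?_
  calc z j ^ p = z j ^ (p - 1) * z j := by
        rw [← Real.rpow_add_one' (hz j hj) (by linarith), sub_add_cancel]
    _ ≤ a ^ (p - 1) * z j := by
        have := hz j hj
        have := hza j hj
        gcongr

theorem mul_sum_erase_le_rpow_sum_sub_sum_rpow {ι : Type*} [Fintype ι] [DecidableEq ι]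
    {p : ℝ} (hp : 1 < p) {z : ι → ℝ} (hz : ∀ j, 0 ≤ z j) {m : ι} (hm : ∀ j, z j ≤ z m) :
    (p - 1) * z m ^ (p - 1) * ∑ j ∈ univ.erase m, z j ≤ (∑ j, z j) ^ p - ∑ j, z j ^ p := by
  set b := ∑ j ∈ univ.erase m, z j
  have hsum : ∑ j, z j = z m + b := (add_sum_erase _ z (mem_univ m)).symm
  have hsum_rpow : ∑ j, z j ^ p = z m ^ p + ∑ j ∈ univ.erase m, z j ^ p :=
    (add_sum_erase _ (fun j => z j ^ p) (mem_univ m)).symm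
  have htail : ∑ j ∈ univ.erase m, z j ^ p ≤ z m ^ (p - 1) * b :=
    sum_rpow_le_rpow_sub_one_mul_sum _ hp.le (fun j _ => hz j) (fun j _ => hm j)
  have htangent := Real.rpow_add_mul_rpow_sub_one_mul_le_add_rpow hp (hz m)
    (sum_nonneg fun j _ => hz j : 0 ≤ b)
  rw [hsum, hsum_rpow]
  linarith

theorem stmt1 (p : ℝ) (hp : 1 < p) (n : ℕ) (hn : 1 ≤ n) :
    ∃ c : ℝ, 0 < c ∧ ∀ z : Fin n → ℝ, (∀ j, 0 ≤ z j) →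
      c * (∑ j, z j) ^ (p - 1) * (⨅ i : Fin n, ∑ j ∈ Finset.univ.erase i, z j)
        ≤ (∑ j, z j) ^ p - ∑ j, (z j) ^ p := by
  have hn0 : (0 : ℝ) < n := by exact_mod_cast hn
  have hnp : 0 < (n : ℝ) ^ (p - 1) := Real.rpow_pos_of_pos hn0 _
  refine ⟨(p - 1) / (n : ℝ) ^ (p - 1), div_pos (by linarith) hnp, fun z hz => ?_⟩
  have : Nonempty (Fin n) := Fin.pos_iff_nonempty.mp hn
  obtain ⟨m, hm⟩ := Finite.exists_max z
  have hsum_le : ∑ j, z j ≤ n * z m := by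
    simpa using sum_le_card_nsmul univ z (z m) fun j _ => hm j
  have hsum_rpow_le : (∑ j, z j) ^ (p - 1) ≤ (n : ℝ) ^ (p - 1) * z m ^ (p - 1) := by
    rw [← Real.mul_rpow hn0.le (hz m)]
    exact Real.rpow_le_rpow (sum_nonneg fun j _ => hz j) hsum_le (by linarith)
  have hmin_le : ⨅ i, ∑ j ∈ univ.erase i, z j ≤ ∑ j ∈ univ.erase m, z j :=
    ciInf_le (Set.finite_range _).bddBelow m
  have hmin_nonneg : 0 ≤ ⨅ i, ∑ j ∈ univ.erase i, z j :=
    le_ciInf fun i => sum_nonneg fun j _ => hz j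
  calc (p - 1) / (n : ℝ) ^ (p - 1) * (∑ j, z j) ^ (p - 1) * ⨅ i, ∑ j ∈ univ.erase i, z j
      ≤ (p - 1) / (n : ℝ) ^ (p - 1) * ((n : ℝ) ^ (p - 1) * z m ^ (p - 1))
          * ∑ j ∈ univ.erase m, z j := by
        have hp1 : 0 ≤ p - 1 := by linarith
        gcongr
        exact mul_nonneg (div_nonneg hp1 hnp.le) (mul_nonneg hnp.le (Real.rpow_nonneg (hz m) _))
    _ = (p - 1) * z m ^ (p - 1) * ∑ j ∈ univ.erase m, z j := by
        field_simp
    _ ≤ _ := mul_sum_erase_le_rpow_sum_sub_sum_rpow hp hz hm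
end

section
/- Let p > 1, let Z ≥ 0 and z_1, …, z_n ≥ 0 be real numbers. Then (Z + ∑_{j=1}^n z_j)^p − ∑_{j=1}^n z_j^p ≥ c(p,n) (Z + ∑_{j=1}^n z_j)^{p−1} · (Z + min_i ∑_{j≠i} z_j) for some constant c(p,n) > 0 depending only on p and n. -/
/-!
Let `M = max_j z_j` and `S = Z + ∑ z_j`. Bounding each `z_j ^ p` by `M ^ (p - 1) * z_j` gives
`∑ z_j ^ p ≤ M ^ (p - 1) * S`, and removing the largest coordinate shows
`Z + min_i ∑_{j ≠ i} z_j ≤ S - M`. It remains to show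
`S ^ p - M ^ (p - 1) * S ≥ c * S ^ (p - 1) * (S - M)` for `0 ≤ M ≤ S`; with `t = M / S` and
`q = p - 1` this is `1 - t ^ q ≥ min q 1 * (1 - t)` on `[0, 1]`, which is Bernoulli's inequality
for `q ≤ 1` and `t ^ q ≤ t` for `q ≥ 1`.
-/

open Finset

lemma min_mul_one_sub_le_one_sub_rpow {q t : ℝ} (hq : 0 < q) (ht₀ : 0 ≤ t) (ht₁ : t ≤ 1) :
    min q 1 * (1 - t) ≤ 1 - t ^ q := by
  rcases le_total q 1 with hq₁ | hq₁
  · have bernoulli : (1 + (t - 1)) ^ q ≤ 1 + q * (t - 1) :=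
      rpow_one_add_le_one_add_mul_self (by linarith) hq.le hq₁
    rw [add_sub_cancel] at bernoulli
    rw [min_eq_left hq₁]
    linarith
  · rw [min_eq_right hq₁]
    linarith [Real.rpow_le_self_of_le_one ht₀ ht₁ hq₁]

lemma min_mul_rpow_mul_sub_le_rpow_sub {p M S : ℝ} (hp : 1 < p) (hM : 0 ≤ M) (hMS : M ≤ S) :
    min (p - 1) 1 * S ^ (p - 1) * (S - M) ≤ S ^ p - M ^ (p - 1) * S := by
  have hp₀ : p - 1 ≠ 0 := by linarith
  rcases (hM.trans hMS).eq_or_lt with rfl | hS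
  · rw [le_antisymm hMS hM, Real.zero_rpow hp₀, Real.zero_rpow (by linarith)]
    simp
  set t := M / S
  have hMt : M = t * S := (div_mul_cancel₀ M hS.ne').symm
  have key := min_mul_one_sub_le_one_sub_rpow (sub_pos.2 hp) (div_nonneg hM hS.le)
    ((div_le_one hS).2 hMS)
  have hSp : S ^ p = S ^ (p - 1) * S := by
    rw [← Real.rpow_add_one hS.ne', sub_add_cancel]
  rw [hSp, hMt, Real.mul_rpow (div_nonneg hM hS.le) hS.le]
  nlinarith [mul_le_mul_of_nonneg_right key (by positivity : 0 ≤ S ^ (p - 1) * S)]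

lemma sum_rpow_le_rpow_mul_sum {ι : Type*} {s : Finset ι} {z : ι → ℝ} {p M : ℝ}
    (hp : 1 ≤ p) (hz : ∀ j ∈ s, 0 ≤ z j) (hzM : ∀ j ∈ s, z j ≤ M) :
    ∑ j ∈ s, z j ^ p ≤ M ^ (p - 1) * ∑ j ∈ s, z j := by
  rw [mul_sum]
  refine sum_le_sum fun j hj => ?_
  calc z j ^ p = z j ^ (p - 1) * z j := by
        rw [← Real.rpow_add_one' (hz j hj) (by linarith), sub_add_cancel]
    _ ≤ M ^ (p - 1) * z j :=
        mul_le_mul_of_nonneg_right (Real.rpow_le_rpow (hz j hj) (hzM j hj) (by linarith)) (hz j hj)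

lemma iInf_sum_erase_le {ι : Type*} [Fintype ι] [DecidableEq ι] (z : ι → ℝ) (i : ι) :
    ⨅ k, ∑ j ∈ univ.erase k, z j ≤ ∑ j, z j - z i :=
  (ciInf_le (Set.finite_range _).bddBelow i).trans_eq
    (eq_sub_of_add_eq (sum_erase_add _ _ (mem_univ i)))

theorem stmt2 (p : ℝ) (hp : 1 < p) (n : ℕ) (hn : 1 ≤ n) :
    ∃ c : ℝ, 0 < c ∧ ∀ (Z : ℝ) (z : Fin n → ℝ), 0 ≤ Z → (∀ j, 0 ≤ z j) →
      c * (Z + ∑ j, z j) ^ (p - 1) * (Z + ⨅ i : Fin n, ∑ j ∈ Finset.univ.erase i, z j)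
        ≤ (Z + ∑ j, z j) ^ p - ∑ j, (z j) ^ p := by
  refine ⟨min (p - 1) 1, lt_min (sub_pos.2 hp) one_pos, fun Z z hZ hz => ?_⟩
  obtain ⟨i, -, hi⟩ := exists_max_image univ z (univ_nonempty_iff.2 (Fin.pos_iff_nonempty.1 hn))
  have hzi : z i ≤ Z + ∑ j, z j := by
    linarith [single_le_sum (fun j _ => hz j) (mem_univ i)]
  calc min (p - 1) 1 * (Z + ∑ j, z j) ^ (p - 1) * (Z + ⨅ k, ∑ j ∈ univ.erase k, z j)
      ≤ min (p - 1) 1 * (Z + ∑ j, z j) ^ (p - 1) * (Z + ∑ j, z j - z i) := by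
        have hc : 0 ≤ min (p - 1) 1 := le_min (by linarith) zero_le_one
        refine mul_le_mul_of_nonneg_left ?_ (mul_nonneg hc (Real.rpow_nonneg ((hz i).trans hzi) _))
        linarith [iInf_sum_erase_le z i]
    _ ≤ (Z + ∑ j, z j) ^ p - z i ^ (p - 1) * (Z + ∑ j, z j) :=
        min_mul_rpow_mul_sub_le_rpow_sub hp (hz i) hzi
    _ ≤ (Z + ∑ j, z j) ^ p - ∑ j, z j ^ p := by
        have hle : z i ^ (p - 1) * ∑ j, z j ≤ z i ^ (p - 1) * (Z + ∑ j, z j) :=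
          mul_le_mul_of_nonneg_left (by linarith) (Real.rpow_nonneg (hz i) _)
        linarith [sum_rpow_le_rpow_mul_sum hp.le (fun j _ => hz j) hi]
end

section
/- Let Φ : ℝ^ℓ → ℝ be positively p-homogeneous (p = d/(d−α), 0 < α < d) with Φ|_{S^{ℓ−1}} Lipschitz, and K : ℝ^d → ℝ^ℓ positively (α−d)-homogeneous with K|_{S^{d−1}} Lipschitz and K nonvanishing. If f ∈ L^1 is supported in the unit ball with ∫ f = 1, then |Φ(K*f(x)) − Φ(K(x))| ≤ C |x|^{−d−1} for all |x| ≥ 2 with C = C(K, Φ, ‖f‖_{L^1}). -/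
/-!
Homogeneity reduces every estimate to the unit sphere: a function `g` that is positively
`s`-homogeneous and Lipschitz on the sphere satisfies `‖g (a + b) - g a‖ ≲ ‖a‖ ^ (s - 1) * ‖b‖`
whenever `2 ‖b‖ ≤ ‖a‖`. For `K`, with `a = x` and `b = -y`, averaging against `f` (where
`∫ f = 1`) gives `K * f (x) - K x = O(‖x‖ ^ (α - d - 1))`. For `Φ`, combined with the crude bound
`|Φ v| ≲ ‖v‖ ^ p` when `b` is not small against `a`, it gives
`|Φ (a + b) - Φ a| ≲ ‖a‖ ^ (p - 1) * ‖b‖ + ‖b‖ ^ p`. With `a = K x = O(‖x‖ ^ (α - d))` both terms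
are `O(‖x‖ ^ (-d - 1))`, because `(α - d) * p = -d` and `p ≥ 1`.
-/

open MeasureTheory Set Metric

lemma exists_lipschitzOnWith_rpow_Icc (s : ℝ) {a b : ℝ} (ha : 0 < a) :
    ∃ c, LipschitzOnWith c (fun r : ℝ => r ^ s) (Icc a b) :=
  ContDiffOn.exists_lipschitzOnWith
    (fun r hr => (Real.contDiffAt_rpow_const_of_ne (n := 1) (by linarith [hr.1])).contDiffWithinAt)
    one_ne_zero (convex_Icc a b) isCompact_Icc

lemma rpow_sub_one_mul_add_rpow_le {a b A B r s p : ℝ} (ha : 0 ≤ a) (hb : 0 ≤ b)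
    (hA : a ≤ A * r ^ s) (hB : b ≤ B * r ^ (s - 1)) (hr : 1 ≤ r) (hp : 1 ≤ p) :
    a ^ (p - 1) * b + b ^ p ≤ (A ^ (p - 1) * B + B ^ p) * r ^ (s * p - 1) := by
  have hr0 : 0 < r := by linarith
  have hA0 : 0 ≤ A := nonneg_of_mul_nonneg_left (ha.trans hA) (by positivity)
  have hB0 : 0 ≤ B := nonneg_of_mul_nonneg_left (hb.trans hB) (by positivity)
  have h₁ : a ^ (p - 1) ≤ A ^ (p - 1) * r ^ (s * (p - 1)) := by
    rw [Real.rpow_mul hr0.le, ← Real.mul_rpow hA0 (by positivity)]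
    exact Real.rpow_le_rpow ha hA (by linarith)
  have h₂ : b ^ p ≤ B ^ p * r ^ ((s - 1) * p) := by
    rw [Real.rpow_mul hr0.le, ← Real.mul_rpow hB0 (by positivity)]
    exact Real.rpow_le_rpow hb hB (by linarith)
  have h₃ : r ^ ((s - 1) * p) ≤ r ^ (s * p - 1) :=
    Real.rpow_le_rpow_of_exponent_le hr (by nlinarith)
  calc a ^ (p - 1) * b + b ^ p
      ≤ A ^ (p - 1) * r ^ (s * (p - 1)) * (B * r ^ (s - 1)) + B ^ p * r ^ (s * p - 1) := by
        gcongr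
        exact h₂.trans (by gcongr)
    _ = (A ^ (p - 1) * B + B ^ p) * r ^ (s * p - 1) := by
        rw [mul_mul_mul_comm, ← Real.rpow_add hr0]
        ring_nf

section Homogeneous

variable {E F : Type*} [NormedAddCommGroup E] [NormedAddCommGroup F]

lemma lipschitzOnWith_sphere_of_norm_sub_le {g : E → F} {L : ℝ}
    (h : ∀ x y : E, ‖x‖ = 1 → ‖y‖ = 1 → ‖g x - g y‖ ≤ L * ‖x - y‖) :
    LipschitzOnWith L.toNNReal g (sphere 0 1) :=
  LipschitzOnWith.of_dist_le' fun x hx y hy => by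
    simpa only [dist_eq_norm] using h x y (by simpa using hx) (by simpa using hy)

lemma LipschitzOnWith.exists_norm_le_of_norm_eq_one {g : E → F} {L : NNReal}
    (hgL : LipschitzOnWith L g (sphere 0 1)) : ∃ M, 0 ≤ M ∧ ∀ z : E, ‖z‖ = 1 → ‖g z‖ ≤ M := by
  by_cases hE : ∃ e : E, ‖e‖ = 1
  · obtain ⟨e, he⟩ := hE
    refine ⟨‖g e‖ + L * 2, by positivity, fun z hz => ?_⟩
    have hze : ‖z - e‖ ≤ 2 := (_root_.norm_sub_le z e).trans (by rw [hz, he]; norm_num)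
    have := hgL.norm_sub_le (by simpa using hz) (by simpa using he)
    calc ‖g z‖ ≤ ‖g e‖ + ‖g z - g e‖ := norm_le_norm_add_norm_sub' (g z) (g e)
      _ ≤ ‖g e‖ + L * 2 := by gcongr; exact this.trans (by gcongr)
  · push Not at hE
    exact ⟨0, le_rfl, fun z hz => (hE z hz).elim⟩

variable [NormedSpace ℝ E] [NormedSpace ℝ F]

lemma norm_inv_norm_smul_sub_self {z : E} (hz : z ≠ 0) : ‖‖z‖⁻¹ • z - z‖ = |‖z‖ - 1| := by
  have hz' : 0 < ‖z‖ := norm_pos_iff.2 hz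
  calc ‖‖z‖⁻¹ • z - z‖ = |‖z‖⁻¹ - 1| * ‖z‖ := by
        rw [← Real.norm_eq_abs, ← norm_smul, sub_smul, one_smul]
    _ = |(‖z‖⁻¹ - 1) * ‖z‖| := by rw [abs_mul, abs_of_pos hz']
    _ = |‖z‖ - 1| := by rw [sub_mul, inv_mul_cancel₀ hz'.ne', one_mul, abs_sub_comm]

def IsPosHomogeneous (s : ℝ) (g : E → F) : Prop :=
  ∀ (x : E) (t : ℝ), 0 < t → g (t • x) = t ^ s • g x

namespace IsPosHomogeneous

variable {s : ℝ} {g : E → F} {L : NNReal}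

theorem eq_rpow_norm_smul (hg : IsPosHomogeneous s g) {z : E} (hz : z ≠ 0) :
    g z = ‖z‖ ^ s • g (‖z‖⁻¹ • z) := by
  have h := hg (‖z‖⁻¹ • z) ‖z‖ (norm_pos_iff.2 hz)
  rwa [smul_inv_smul₀ (norm_ne_zero_iff.2 hz)] at h

theorem map_zero (hg : IsPosHomogeneous s g) (hs : s ≠ 0) : g 0 = 0 := by
  have h2 : (2 : ℝ) ^ s ≠ 1 := by
    rw [← Real.rpow_zero 2, Ne, Real.rpow_right_inj two_pos (by norm_num)]
    exact hs
  have h : ((2 : ℝ) ^ s - 1) • g 0 = 0 := by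
    rw [sub_smul, ← hg 0 2 two_pos, smul_zero, one_smul, sub_self]
  exact (smul_eq_zero.1 h).resolve_left (sub_ne_zero.2 h2)

theorem exists_norm_le (hg : IsPosHomogeneous s g) (hgL : LipschitzOnWith L g (sphere 0 1))
    (hs : s ≠ 0) : ∃ M, 0 ≤ M ∧ ∀ z, ‖g z‖ ≤ M * ‖z‖ ^ s := by
  obtain ⟨M, hM0, hM⟩ := hgL.exists_norm_le_of_norm_eq_one
  refine ⟨M, hM0, fun z => ?_⟩
  rcases eq_or_ne z 0 with rfl | hz
  · simp [hg.map_zero hs, Real.zero_rpow hs]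
  · rw [hg.eq_rpow_norm_smul hz, norm_smul, Real.norm_of_nonneg (by positivity), mul_comm]
    exact mul_le_mul_of_nonneg_right (hM _ (norm_smul_inv_norm hz)) (by positivity)

theorem continuousOn_compl_zero (hg : IsPosHomogeneous s g)
    (hgL : LipschitzOnWith L g (sphere 0 1)) : ContinuousOn g {0}ᶜ := by
  refine ContinuousOn.congr (f := fun z => ‖z‖ ^ s • g (‖z‖⁻¹ • z)) ?_
    fun z hz => hg.eq_rpow_norm_smul hz
  refine ContinuousOn.smul ?_ (hgL.continuousOn.comp ?_ fun z hz => ?_)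
  · exact fun z hz => ((continuous_norm.continuousAt).rpow_const
      (Or.inl (norm_ne_zero_iff.2 hz))).continuousWithinAt
  · exact (continuousOn_id.norm.inv₀ fun z hz => norm_ne_zero_iff.2 hz).smul continuousOn_id
  · exact mem_sphere_zero_iff_norm.2 (norm_smul_inv_norm hz)

theorem exists_norm_add_sub_le_of_norm_eq_one (hg : IsPosHomogeneous s g)
    (hgL : LipschitzOnWith L g (sphere 0 1)) :
    ∃ C, 0 ≤ C ∧ ∀ u v : E, ‖u‖ = 1 → 2 * ‖v‖ ≤ 1 → ‖g (u + v) - g u‖ ≤ C * ‖v‖ := by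
  obtain ⟨M, hM0, hM⟩ := hgL.exists_norm_le_of_norm_eq_one
  obtain ⟨c, hc⟩ := exists_lipschitzOnWith_rpow_Icc s (a := 1 / 2) (b := 3 / 2) (by norm_num)
  refine ⟨c * M + L * 2, by positivity, fun u v hu hv => ?_⟩
  set z := u + v
  have hzu : |‖z‖ - 1| ≤ ‖v‖ := by simpa [hu, z] using abs_norm_sub_norm_le (u + v) u
  have hz : ‖z‖ ∈ Icc (1 / 2 : ℝ) (3 / 2) := by
    constructor <;> linarith [(abs_le.1 hzu).1, (abs_le.1 hzu).2]
  have hz0 : z ≠ 0 := norm_pos_iff.1 (by linarith [hz.1])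
  set w := ‖z‖⁻¹ • z
  have hw : ‖w‖ = 1 := norm_smul_inv_norm hz0
  have hwu : ‖w - u‖ ≤ 2 * ‖v‖ := by
    calc ‖w - u‖ ≤ ‖w - z‖ + ‖z - u‖ := norm_sub_le_norm_sub_add_norm_sub w z u
      _ ≤ ‖v‖ + ‖v‖ := by
        rw [norm_inv_norm_smul_sub_self hz0, show z - u = v by simp [z]]; gcongr
      _ = 2 * ‖v‖ := by ring
  have hpow : |‖z‖ ^ s - 1| ≤ c * ‖v‖ := by
    have := hc.dist_le_mul _ hz 1 (by norm_num)
    rw [Real.dist_eq, Real.dist_eq, Real.one_rpow] at this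
    exact this.trans (by gcongr)
  have hgz : g z = ‖z‖ ^ s • g w := hg.eq_rpow_norm_smul hz0
  -- radial part: Lipschitz bound of `r ↦ r ^ s` near `1`; angular part: Lipschitz bound on the sphere
  calc ‖g z - g u‖ = ‖(‖z‖ ^ s - 1) • g w + (g w - g u)‖ := by
        rw [hgz, sub_smul, one_smul]; congr 1; abel
    _ ≤ |‖z‖ ^ s - 1| * ‖g w‖ + ‖g w - g u‖ := by
        rw [← Real.norm_eq_abs, ← norm_smul]; exact norm_add_le _ _
    _ ≤ c * ‖v‖ * M + L * (2 * ‖v‖) := by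
        gcongr
        · exact hM w hw
        · exact (hgL.norm_sub_le (by simpa using hw) (by simpa using hu)).trans (by gcongr)
    _ = (c * M + L * 2) * ‖v‖ := by ring

theorem exists_norm_add_sub_le (hg : IsPosHomogeneous s g)
    (hgL : LipschitzOnWith L g (sphere 0 1)) :
    ∃ C, 0 ≤ C ∧ ∀ a b : E, 2 * ‖b‖ ≤ ‖a‖ → ‖g (a + b) - g a‖ ≤ C * ‖a‖ ^ (s - 1) * ‖b‖ := by
  obtain ⟨C, hC0, hC⟩ := hg.exists_norm_add_sub_le_of_norm_eq_one hgL
  refine ⟨C, hC0, fun a b hab => ?_⟩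
  rcases eq_or_ne a 0 with rfl | ha
  · obtain rfl : b = 0 := norm_le_zero_iff.1 (by rw [norm_zero] at hab; linarith)
    simp
  have ht : 0 < ‖a‖ := norm_pos_iff.2 ha
  have hscale : ∀ z, g z = ‖a‖ ^ s • g (‖a‖⁻¹ • z) := fun z => by
    rw [← hg _ _ ht, smul_inv_smul₀ ht.ne']
  have hb : 2 * ‖‖a‖⁻¹ • b‖ ≤ 1 := by
    rw [norm_smul, norm_inv, norm_norm, ← mul_assoc, mul_comm 2, mul_assoc, inv_mul_le_iff₀ ht,
      mul_one]
    exact hab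
  calc ‖g (a + b) - g a‖ = ‖a‖ ^ s * ‖g (‖a‖⁻¹ • a + ‖a‖⁻¹ • b) - g (‖a‖⁻¹ • a)‖ := by
        rw [hscale (a + b), hscale a, ← smul_sub, norm_smul, smul_add,
          Real.norm_of_nonneg (by positivity)]
    _ ≤ ‖a‖ ^ s * (C * ‖‖a‖⁻¹ • b‖) := by gcongr; exact hC _ _ (norm_smul_inv_norm ha) hb
    _ = C * ‖a‖ ^ (s - 1) * ‖b‖ := by
        rw [norm_smul, norm_inv, norm_norm, Real.rpow_sub_one ht.ne']
        ring

theorem exists_norm_add_sub_le_add_rpow (hg : IsPosHomogeneous s g)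
    (hgL : LipschitzOnWith L g (sphere 0 1)) (hs : 0 < s) :
    ∃ C, 0 ≤ C ∧ ∀ a b : E, ‖g (a + b) - g a‖ ≤ C * (‖a‖ ^ (s - 1) * ‖b‖ + ‖b‖ ^ s) := by
  obtain ⟨C, hC0, hC⟩ := hg.exists_norm_add_sub_le hgL
  obtain ⟨M, hM0, hM⟩ := hg.exists_norm_le hgL hs.ne'
  refine ⟨max C (M * (3 ^ s + 2 ^ s)), by positivity, fun a b => ?_⟩
  rcases le_or_gt (2 * ‖b‖) ‖a‖ with hab | hab
  · calc ‖g (a + b) - g a‖ ≤ C * (‖a‖ ^ (s - 1) * ‖b‖) := by rw [← mul_assoc]; exact hC a b hab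
      _ ≤ max C (M * (3 ^ s + 2 ^ s)) * (‖a‖ ^ (s - 1) * ‖b‖ + ‖b‖ ^ s) := by
        gcongr
        · exact le_max_left _ _
        · exact le_add_of_nonneg_right (by positivity)
  · have hab' : ‖a + b‖ ^ s ≤ 3 ^ s * ‖b‖ ^ s := by
      rw [← Real.mul_rpow (by norm_num) (norm_nonneg b)]
      gcongr
      linarith [norm_add_le a b]
    have ha : ‖a‖ ^ s ≤ 2 ^ s * ‖b‖ ^ s := by
      rw [← Real.mul_rpow (by norm_num) (norm_nonneg b)]
      gcongr
    calc ‖g (a + b) - g a‖ ≤ M * ‖a + b‖ ^ s + M * ‖a‖ ^ s :=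
          (norm_sub_le _ _).trans (add_le_add (hM _) (hM _))
      _ ≤ M * (3 ^ s * ‖b‖ ^ s) + M * (2 ^ s * ‖b‖ ^ s) := by gcongr
      _ = M * (3 ^ s + 2 ^ s) * ‖b‖ ^ s := by ring
      _ ≤ max C (M * (3 ^ s + 2 ^ s)) * (‖a‖ ^ (s - 1) * ‖b‖ + ‖b‖ ^ s) := by
        gcongr
        · exact le_max_right _ _
        · exact le_add_of_nonneg_left (by positivity)

theorem exists_norm_integral_smul_sub_le [ProperSpace E] [MeasurableSpace E] [BorelSpace E]
    [CompleteSpace F] (μ : Measure E) (hg : IsPosHomogeneous s g)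
    (hgL : LipschitzOnWith L g (sphere 0 1)) :
    ∃ C, 0 ≤ C ∧ ∀ f : E → ℝ, Integrable f μ → Function.support f ⊆ closedBall 0 1 →
      ∫ y, f y ∂μ = 1 → ∀ x : E, 2 ≤ ‖x‖ →
        ‖∫ y, f y • g (x - y) ∂μ - g x‖ ≤ C * (∫ y, |f y| ∂μ) * ‖x‖ ^ (s - 1) := by
  obtain ⟨C, hC0, hC⟩ := hg.exists_norm_add_sub_le hgL
  refine ⟨C, hC0, fun f hf hsupp hf1 x hx => ?_⟩
  have hfy : ∀ y, y ∉ closedBall (0 : E) 1 → f y = 0 := fun y hy =>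
    Function.notMem_support.1 fun h => hy (hsupp h)
  have hsmall : ∀ y ∈ closedBall (0 : E) 1, 2 * ‖-y‖ ≤ ‖x‖ := fun y hy => by
    rw [norm_neg]; linarith [mem_closedBall_zero_iff.1 hy]
  have hmaps : MapsTo (fun y => x - y) (closedBall 0 1) {0}ᶜ := fun y hy => by
    have hyx : ‖y‖ < ‖x‖ := by linarith [mem_closedBall_zero_iff.1 hy]
    exact sub_ne_zero.2 (ne_of_apply_ne norm hyx.ne')
  have hint : Integrable (fun y => f y • g (x - y)) μ :=
    IntegrableOn.integrable_of_forall_notMem_eq_zero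
      (hf.integrableOn.smul_continuousOn ((hg.continuousOn_compl_zero hgL).comp
        (continuous_const.sub continuous_id).continuousOn hmaps) (isCompact_closedBall 0 1))
      fun y hy => by rw [hfy y hy, zero_smul]
  have hpt : ∀ y, ‖f y • g (x - y) - f y • g x‖ ≤ |f y| * (C * ‖x‖ ^ (s - 1)) := fun y => by
    rw [← smul_sub, norm_smul, Real.norm_eq_abs]
    by_cases hy : y ∈ closedBall (0 : E) 1
    · gcongr
      calc ‖g (x - y) - g x‖ = ‖g (x + -y) - g x‖ := by rw [← sub_eq_add_neg]
        _ ≤ C * ‖x‖ ^ (s - 1) * ‖-y‖ := hC _ _ (hsmall y hy)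
        _ ≤ C * ‖x‖ ^ (s - 1) * 1 := by
          gcongr; rw [norm_neg]; exact mem_closedBall_zero_iff.1 hy
        _ = C * ‖x‖ ^ (s - 1) := mul_one _
    · rw [hfy y hy, abs_zero, zero_mul, zero_mul]
  calc ‖∫ y, f y • g (x - y) ∂μ - g x‖ = ‖∫ y, (f y • g (x - y) - f y • g x) ∂μ‖ := by
        rw [integral_sub hint (hf.smul_const _), integral_smul_const, hf1, one_smul]
    _ ≤ ∫ y, |f y| * (C * ‖x‖ ^ (s - 1)) ∂μ :=
        norm_integral_le_of_norm_le (hf.abs.mul_const _) (ae_of_all _ hpt)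
    _ = C * (∫ y, |f y| ∂μ) * ‖x‖ ^ (s - 1) := by rw [integral_mul_const]; ring

end IsPosHomogeneous

end Homogeneous

theorem stmt9_general (d ℓ : ℕ) (α p L L' M₁ : ℝ) (hα : 0 < α) (hαd : α < d)
    (hp : p = d / (d - α))
    (K : EuclideanSpace ℝ (Fin d) → EuclideanSpace ℝ (Fin ℓ))
    (Φ : EuclideanSpace ℝ (Fin ℓ) → ℝ)
    (hK : ∀ (x : EuclideanSpace ℝ (Fin d)) (lam : ℝ), 0 < lam →
      K (lam • x) = lam ^ (α - d) • K x)
    (hKL : ∀ x y : EuclideanSpace ℝ (Fin d), ‖x‖ = 1 → ‖y‖ = 1 →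
      ‖K x - K y‖ ≤ L * ‖x - y‖)
    (hΦ : ∀ (v : EuclideanSpace ℝ (Fin ℓ)) (lam : ℝ), 0 < lam →
      Φ (lam • v) = lam ^ p * Φ v)
    (hΦL : ∀ v w : EuclideanSpace ℝ (Fin ℓ), ‖v‖ = 1 → ‖w‖ = 1 →
      |Φ v - Φ w| ≤ L' * ‖v - w‖) :
    ∃ C : ℝ, ∀ f : EuclideanSpace ℝ (Fin d) → ℝ, Integrable f →
      Function.support f ⊆ Metric.closedBall 0 1 → (∫ y, f y) = 1 →
      (∫ y, |f y|) ≤ M₁ →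
      ∀ x : EuclideanSpace ℝ (Fin d), 2 ≤ ‖x‖ →
        |Φ (∫ y, f y • K (x - y)) - Φ (K x)| ≤ C * ‖x‖ ^ (-(d : ℝ) - 1) := by
  have hdα : 0 < (d : ℝ) - α := by linarith
  have hp1 : 1 ≤ p := by rw [hp, le_div_iff₀ hdα]; linarith
  have hexp : (α - d) * p - 1 = -(d : ℝ) - 1 := by rw [hp]; field_simp; ring
  have hKhom : IsPosHomogeneous (α - d) K := hK
  have hKlip := lipschitzOnWith_sphere_of_norm_sub_le hKL
  obtain ⟨A, -, hA⟩ := hKhom.exists_norm_le hKlip (by linarith)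
  obtain ⟨B, hB0, hB⟩ := hKhom.exists_norm_integral_smul_sub_le volume hKlip
  obtain ⟨C, hC0, hC⟩ := IsPosHomogeneous.exists_norm_add_sub_le_add_rpow (s := p) hΦ
    (lipschitzOnWith_sphere_of_norm_sub_le hΦL) (by linarith)
  refine ⟨C * (A ^ (p - 1) * (B * M₁) + (B * M₁) ^ p), fun f hf hsupp hf1 hM x hx => ?_⟩
  set I := ∫ y, f y • K (x - y)
  have hIK : ‖I - K x‖ ≤ B * M₁ * ‖x‖ ^ (α - d - 1) :=
    (hB f hf hsupp hf1 x hx).trans (by gcongr)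
  calc |Φ I - Φ (K x)| = ‖Φ (K x + (I - K x)) - Φ (K x)‖ := by
        rw [add_sub_cancel, Real.norm_eq_abs]
    _ ≤ C * (‖K x‖ ^ (p - 1) * ‖I - K x‖ + ‖I - K x‖ ^ p) := hC _ _
    _ ≤ C * ((A ^ (p - 1) * (B * M₁) + (B * M₁) ^ p) * ‖x‖ ^ ((α - d) * p - 1)) := by
        gcongr
        exact rpow_sub_one_mul_add_rpow_le (norm_nonneg _) (norm_nonneg _) (hA x) hIK
          (by linarith) hp1
    _ = C * (A ^ (p - 1) * (B * M₁) + (B * M₁) ^ p) * ‖x‖ ^ (-(d : ℝ) - 1) := by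
        rw [hexp, mul_assoc]

theorem stmt9 (d ℓ : ℕ) (α p L L' M₁ : ℝ) (hα : 0 < α) (hαd : α < d)
    (hp : p = d / (d - α))
    (K : EuclideanSpace ℝ (Fin d) → EuclideanSpace ℝ (Fin ℓ))
    (Φ : EuclideanSpace ℝ (Fin ℓ) → ℝ)
    (hK : ∀ (x : EuclideanSpace ℝ (Fin d)) (lam : ℝ), 0 < lam →
      K (lam • x) = lam ^ (α - d) • K x)
    (hKL : ∀ x y : EuclideanSpace ℝ (Fin d), ‖x‖ = 1 → ‖y‖ = 1 →
      ‖K x - K y‖ ≤ L * ‖x - y‖)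
    (hKne : ∀ x : EuclideanSpace ℝ (Fin d), x ≠ 0 → K x ≠ 0)
    (hΦ : ∀ (v : EuclideanSpace ℝ (Fin ℓ)) (lam : ℝ), 0 < lam →
      Φ (lam • v) = lam ^ p * Φ v)
    (hΦL : ∀ v w : EuclideanSpace ℝ (Fin ℓ), ‖v‖ = 1 → ‖w‖ = 1 →
      |Φ v - Φ w| ≤ L' * ‖v - w‖) :
    ∃ C : ℝ, ∀ f : EuclideanSpace ℝ (Fin d) → ℝ, Integrable f →
      Function.support f ⊆ Metric.closedBall 0 1 → (∫ y, f y) = 1 →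
      (∫ y, |f y|) ≤ M₁ →
      ∀ x : EuclideanSpace ℝ (Fin d), 2 ≤ ‖x‖ →
        |Φ (∫ y, f y • K (x - y)) - Φ (K x)| ≤ C * ‖x‖ ^ (-(d : ℝ) - 1) :=
  stmt9_general d ℓ α p L L' M₁ hα hαd hp K Φ hK hKL hΦ hΦL
end

section
/- Let Ψ : (0,∞) → ℝ be measurable with |Ψ(ρ)| ≤ M for all ρ and Ψ(ρ) = I + O(ρ^β) as ρ → 0 for some β > 0 and I ≠ 0. Then there exists γ ∈ (0,1) such that |∫_4^{Cn} r^{−1} Ψ(r/n) dr| → ∞ as n → ∞, for any fixed C > 0. In fact, the integral equals (I γ + O(M(1−γ))) log n + O(1), which tends to ±∞ whenever M(1−γ) < |I| γ. -/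
/-!
Substituting `r = n s` turns the integral into `∫_{4/n}^{C} s⁻¹ Ψ(s) ds`. Below `ρ = min ρ₀ C`
the asymptotics `Ψ(s) = I + O(s^β)` give `I log (ρ n / 4) + O(1)`, since `s⁻¹ · s^β` is
integrable at `0`; the piece over `[ρ, C]` does not depend on `n`. Hence the integral is
`I log n + O(1)`, which diverges in absolute value because `I ≠ 0`; in particular any
`γ ∈ (0, 1)` will do.
-/

open MeasureTheory Filter

theorem intervalIntegral.integral_inv_mul_comp_div (f : ℝ → ℝ) {a b c : ℝ} (hc : c ≠ 0) :
    ∫ r in a..b, r⁻¹ * f (r / c) = ∫ s in a / c..b / c, s⁻¹ * f s := by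
  have hscale : ∀ r : ℝ, r⁻¹ * f (r / c) = c⁻¹ * ((r / c)⁻¹ * f (r / c)) := fun r => by
    field_simp
  simp_rw [hscale, intervalIntegral.integral_const_mul,
    intervalIntegral.integral_comp_div (fun s => s⁻¹ * f s) hc, smul_eq_mul,
    inv_mul_cancel_left₀ hc]

theorem intervalIntegrable_inv_mul_of_abs_le {Ψ : ℝ → ℝ} {M a b : ℝ} (hmeas : Measurable Ψ)
    (hM : ∀ s : ℝ, 0 < s → |Ψ s| ≤ M) (ha : 0 < a) (hb : 0 < b) :
    IntervalIntegrable (fun s => s⁻¹ * Ψ s) volume a b := by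
  have hpos : ∀ s ∈ Set.uIcc a b, 0 < s := fun s hs => lt_of_lt_of_le (lt_min ha hb) hs.1
  have hinv : IntervalIntegrable (fun s : ℝ => M * s⁻¹) volume a b :=
    (intervalIntegral.intervalIntegrable_inv (fun s hs => (hpos s hs).ne')
      continuousOn_id).const_mul M
  refine hinv.mono_fun (measurable_inv.mul hmeas).aestronglyMeasurable ?_
  filter_upwards [ae_restrict_mem measurableSet_uIoc] with s hs
  have hs0 := hpos s (Set.uIoc_subset_uIcc hs)
  calc ‖s⁻¹ * Ψ s‖ = s⁻¹ * |Ψ s| := by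
        rw [Real.norm_eq_abs, abs_mul, abs_of_pos (inv_pos.mpr hs0)]
    _ ≤ s⁻¹ * M := mul_le_mul_of_nonneg_left (hM s hs0) (inv_nonneg.mpr hs0.le)
    _ ≤ ‖M * s⁻¹‖ := by rw [mul_comm]; exact le_abs_self _

theorem abs_integral_inv_mul_sub_mul_log_le {Ψ : ℝ → ℝ} {I β C₀ ρ x : ℝ} (hβ : 0 < β)
    (hasym : ∀ s : ℝ, 0 < s → s ≤ ρ → |Ψ s - I| ≤ C₀ * s ^ β) (hx : 0 < x) (hxρ : x ≤ ρ)
    (hint : IntervalIntegrable (fun s => s⁻¹ * Ψ s) volume x ρ) :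
    |(∫ s in x..ρ, s⁻¹ * Ψ s) - I * Real.log (ρ / x)| ≤ C₀ * ρ ^ β / β := by
  have hC₀ : 0 ≤ C₀ :=
    nonneg_of_mul_nonneg_left ((abs_nonneg _).trans (hasym x hx hxρ))
      (Real.rpow_pos_of_pos hx β)
  have h0 : (0 : ℝ) ∉ Set.uIcc x ρ := by
    rw [Set.uIcc_of_le hxρ]; exact fun h => hx.not_ge h.1
  have hlog : ∫ s in x..ρ, I * s⁻¹ = I * Real.log (ρ / x) := by
    rw [intervalIntegral.integral_const_mul, integral_inv h0]
  have hdiff : (∫ s in x..ρ, s⁻¹ * Ψ s) - I * Real.log (ρ / x)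
      = ∫ s in x..ρ, s⁻¹ * Ψ s - I * s⁻¹ := by
    have hinv : IntervalIntegrable (fun s : ℝ => I * s⁻¹) volume x ρ :=
      (intervalIntegral.intervalIntegrable_inv (fun s hs => by rintro rfl; exact h0 hs)
        continuousOn_id).const_mul I
    rw [intervalIntegral.integral_sub hint hinv, hlog]
  have hbound : ∀ s ∈ Set.Ioc x ρ, ‖s⁻¹ * Ψ s - I * s⁻¹‖ ≤ C₀ * s ^ (β - 1) := by
    rintro s ⟨hxs, hsρ⟩
    have hs : 0 < s := hx.trans hxs
    calc ‖s⁻¹ * Ψ s - I * s⁻¹‖ = s⁻¹ * |Ψ s - I| := by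
          rw [Real.norm_eq_abs, show s⁻¹ * Ψ s - I * s⁻¹ = s⁻¹ * (Ψ s - I) by ring, abs_mul,
            abs_of_pos (inv_pos.mpr hs)]
      _ ≤ s⁻¹ * (C₀ * s ^ β) :=
          mul_le_mul_of_nonneg_left (hasym s hs hsρ) (inv_nonneg.mpr hs.le)
      _ = C₀ * s ^ (β - 1) := by rw [Real.rpow_sub hs, Real.rpow_one]; field_simp
  have hrpow : ∫ s in x..ρ, C₀ * s ^ (β - 1) = C₀ * (ρ ^ β - x ^ β) / β := by
    rw [intervalIntegral.integral_const_mul, integral_rpow (Or.inl (by linarith)),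
      sub_add_cancel, mul_div_assoc]
  rw [hdiff, ← Real.norm_eq_abs]
  calc ‖∫ s in x..ρ, s⁻¹ * Ψ s - I * s⁻¹‖ ≤ ∫ s in x..ρ, C₀ * s ^ (β - 1) :=
        intervalIntegral.norm_integral_le_of_norm_le hxρ (Eventually.of_forall hbound)
          ((intervalIntegral.intervalIntegrable_rpow' (by linarith)).const_mul C₀)
    _ ≤ C₀ * ρ ^ β / β := by
        rw [hrpow]
        gcongr
        linarith [Real.rpow_nonneg hx.le β]

theorem abs_integral_inv_mul_add_mul_log_le {Ψ : ℝ → ℝ} {M I β C₀ ρ C x : ℝ}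
    (hmeas : Measurable Ψ) (hβ : 0 < β) (hM : ∀ s : ℝ, 0 < s → |Ψ s| ≤ M)
    (hasym : ∀ s : ℝ, 0 < s → s ≤ ρ → |Ψ s - I| ≤ C₀ * s ^ β) (hC : 0 < C) (hx : 0 < x)
    (hxρ : x ≤ ρ) :
    |(∫ s in x..C, s⁻¹ * Ψ s) + I * Real.log x|
      ≤ C₀ * ρ ^ β / β + |I * Real.log ρ| + |∫ s in ρ..C, s⁻¹ * Ψ s| := by
  have hρ : 0 < ρ := hx.trans_le hxρ
  have hnear := abs_integral_inv_mul_sub_mul_log_le hβ hasym hx hxρ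
    (intervalIntegrable_inv_mul_of_abs_le hmeas hM hx hρ)
  rw [Real.log_div hρ.ne' hx.ne'] at hnear
  rw [← intervalIntegral.integral_add_adjacent_intervals
    (intervalIntegrable_inv_mul_of_abs_le hmeas hM hx hρ)
    (intervalIntegrable_inv_mul_of_abs_le hmeas hM hρ hC)]
  set E := (∫ s in x..ρ, s⁻¹ * Ψ s) - I * (Real.log ρ - Real.log x)
  rw [show (∫ s in x..ρ, s⁻¹ * Ψ s) + (∫ s in ρ..C, s⁻¹ * Ψ s) + I * Real.log x
    = E + I * Real.log ρ + ∫ s in ρ..C, s⁻¹ * Ψ s by ring]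
  linarith [abs_add_le (E + I * Real.log ρ) (∫ s in ρ..C, s⁻¹ * Ψ s),
    abs_add_le E (I * Real.log ρ)]

theorem tendsto_abs_atTop_of_abs_sub_mul_log_le {u : ℕ → ℝ} {I K : ℝ} (hI : I ≠ 0)
    (hu : ∀ᶠ n : ℕ in atTop, |u n - I * Real.log n| ≤ K) :
    Tendsto (fun n => |u n|) atTop atTop := by
  have hlog : Tendsto (fun n : ℕ => |I| * Real.log n - K) atTop atTop :=
    tendsto_atTop_add_const_right _ _
      ((Real.tendsto_log_atTop.comp tendsto_natCast_atTop_atTop).const_mul_atTop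
        (abs_pos.mpr hI))
  refine tendsto_atTop_mono' atTop ?_ hlog
  filter_upwards [hu, eventually_ge_atTop 1] with n hn hn1
  have hlogn : 0 ≤ Real.log n := Real.log_nonneg (by exact_mod_cast hn1)
  have hmul : |I * Real.log n| = |I| * Real.log n := by rw [abs_mul, abs_of_nonneg hlogn]
  linarith [abs_sub_abs_le_abs_sub (I * Real.log n) (u n),
    abs_sub_comm (I * Real.log n) (u n)]

theorem stmt10 (Ψ : ℝ → ℝ) (M I β C₀ ρ₀ : ℝ)
    (hmeas : Measurable Ψ) (hβ : 0 < β) (hI : I ≠ 0) (hρ₀ : 0 < ρ₀)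
    (hM : ∀ ρ : ℝ, 0 < ρ → |Ψ ρ| ≤ M)
    (hasym : ∀ ρ : ℝ, 0 < ρ → ρ ≤ ρ₀ → |Ψ ρ - I| ≤ C₀ * ρ ^ β) :
    ∃ γ ∈ Set.Ioo (0 : ℝ) 1, ∀ C : ℝ, 0 < C →
      Tendsto (fun n : ℕ => |∫ r in Set.Ioc (4 : ℝ) (C * n), r⁻¹ * Ψ (r / n)|)
        atTop atTop := by
  refine ⟨1 / 2, by norm_num, fun C hC => ?_⟩
  set ρ := min ρ₀ C
  have hρ : 0 < ρ := lt_min hρ₀ hC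
  refine tendsto_abs_atTop_of_abs_sub_mul_log_le (K := C₀ * ρ ^ β / β + |I * Real.log ρ|
    + |∫ s in ρ..C, s⁻¹ * Ψ s| + |I * Real.log 4|) hI ?_
  filter_upwards [(tendsto_natCast_atTop_atTop (R := ℝ)).eventually_ge_atTop (4 / ρ)] with n hn
  have hn0 : (0 : ℝ) < n := (div_pos four_pos hρ).trans_le hn
  have hxρ : 4 / (n : ℝ) ≤ ρ := (div_le_comm₀ hρ hn0).mp hn
  have h4C : (4 : ℝ) ≤ C * n := (div_le_iff₀ hn0).mp (hxρ.trans (min_le_right _ _))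
  have hscale : ∫ r in Set.Ioc (4 : ℝ) (C * n), r⁻¹ * Ψ (r / n)
      = ∫ s in 4 / (n : ℝ)..C, s⁻¹ * Ψ s := by
    rw [← intervalIntegral.integral_of_le h4C,
      intervalIntegral.integral_inv_mul_comp_div Ψ hn0.ne', mul_div_cancel_right₀ C hn0.ne']
  have hnear := abs_integral_inv_mul_add_mul_log_le hmeas hβ hM
    (fun s hs hsρ => hasym s hs (hsρ.trans (min_le_left _ _))) hC (by positivity) hxρ
  rw [Real.log_div four_ne_zero hn0.ne'] at hnear
  rw [hscale]
  calc _ = |((∫ s in 4 / (n : ℝ)..C, s⁻¹ * Ψ s) + I * (Real.log 4 - Real.log n))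
          - I * Real.log 4| := by
        congr 1; ring
    _ ≤ _ := (abs_sub _ _).trans (by gcongr)
end

section
/- Let p ∈ (1,∞) and define 𝓜_p(x,y) = min(x^{p−1}y, x y^{p−1}) for p ∈ (1,2] and 𝓜_p(x,y) = ½(x^{p−1}y + x y^{p−1}) for p > 2, for x, y ≥ 0. Then for all a, b ∈ ℝ^ℓ: |Φ(a+b) − Φ(a) − Φ(b)| ≤ C(p, Φ) 𝓜_p(|a|, |b|), where Φ : ℝ^ℓ → ℝ is positively p-homogeneous and Lipschitz on the unit sphere. -/
/-- The function `𝓜_p` from the paper. -/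
noncomputable def Mfun (p x y : ℝ) : ℝ :=
  if p ≤ 2 then min (x ^ (p - 1) * y) (x * y ^ (p - 1))
  else (x ^ (p - 1) * y + x * y ^ (p - 1)) / 2

/-- A mean-value-type bound for real powers, via Bernoulli's inequality. -/
lemma stmt19_rpow_diff_le {p r t : ℝ} (hp : 1 ≤ p) (hr : 0 ≤ r) (hrt : r ≤ t) :
    t ^ p - r ^ p ≤ p * t ^ (p - 1) * (t - r) := by
  rcases (hr.trans hrt).eq_or_lt with h | ht
  · have hr0 : r = 0 := le_antisymm (h ▸ hrt) hr
    subst hr0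
    have : t = 0 := h.symm
    subst this
    simp
  · have hu : -1 ≤ r / t - 1 := by
      have : 0 ≤ r / t := div_nonneg hr ht.le
      linarith
    have hb := one_add_mul_self_le_rpow_one_add hu hp
    rw [show 1 + (r / t - 1) = r / t by ring] at hb
    rw [Real.div_rpow hr ht.le] at hb
    have htp : 0 < t ^ p := Real.rpow_pos_of_pos ht p
    have h2 : t ^ p = t ^ (p - 1) * t := by
      rw [show p = p - 1 + 1 by ring, Real.rpow_add_one (ne_of_gt ht)]
      ring_nf
    have h3 : t ^ p * (r / t) = t ^ (p - 1) * r := by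
      rw [h2]; field_simp
    have h4 : t ^ p * (1 + p * (r / t - 1)) ≤ r ^ p := by
      calc t ^ p * (1 + p * (r / t - 1)) ≤ t ^ p * (r ^ p / t ^ p) := by
            exact mul_le_mul_of_nonneg_left hb htp.le
        _ = r ^ p := by field_simp
    nlinarith [h4, h3, h2]

lemma stmt19_Mfun_symm (p x y : ℝ) : Mfun p x y = Mfun p y x := by
  unfold Mfun
  split_ifs with h
  · rw [min_comm]; ring_nf
  · ring_nf

lemma stmt19_Mfun_nonneg {p x y : ℝ} (hx : 0 ≤ x) (hy : 0 ≤ y) : 0 ≤ Mfun p x y := by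
  unfold Mfun
  have h1 : 0 ≤ x ^ (p - 1) * y := mul_nonneg (Real.rpow_nonneg hx _) hy
  have h2 : 0 ≤ x * y ^ (p - 1) := mul_nonneg hx (Real.rpow_nonneg hy _)
  split_ifs with h
  · exact le_min h1 h2
  · linarith

lemma stmt19_key_bound {p r s : ℝ} (hp : 1 < p) (hs : 0 ≤ s) (hsr : s ≤ r) :
    r ^ (p - 1) * s ≤ 2 * Mfun p r s := by
  have hr : 0 ≤ r := hs.trans hsr
  rcases hs.eq_or_lt with rfl | hs'
  · simp [stmt19_Mfun_nonneg hr le_rfl]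
  · have hr' : 0 < r := lt_of_lt_of_le hs' hsr
    unfold Mfun
    have h1 : 0 ≤ r ^ (p - 1) * s :=
      mul_nonneg (Real.rpow_nonneg hr _) hs
    have h2 : 0 ≤ r * s ^ (p - 1) := mul_nonneg hr (Real.rpow_nonneg hs _)
    split_ifs with h
    · have hle : r ^ (p - 1) * s ≤ r * s ^ (p - 1) := by
        have e1 : r ^ (p - 1) = r ^ (p - 2) * r := by
          rw [show p - 1 = p - 2 + 1 by ring, Real.rpow_add_one hr'.ne']
        have e2 : s ^ (p - 1) = s ^ (p - 2) * s := by
          rw [show p - 1 = p - 2 + 1 by ring, Real.rpow_add_one hs'.ne']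
        have e3 : r ^ (p - 2) ≤ s ^ (p - 2) :=
          Real.rpow_le_rpow_of_nonpos hs' hsr (by linarith)
        rw [e1, e2]
        have h4 := mul_le_mul_of_nonneg_right e3 (mul_nonneg hr'.le hs'.le)
        nlinarith [h4]
      rw [min_eq_left hle]
      linarith
    · linarith

set_option maxHeartbeats 1000000 in
theorem stmt19 (ℓ : ℕ) (p L M : ℝ) (hp : 1 < p) :
    ∃ C : ℝ, ∀ Φ : EuclideanSpace ℝ (Fin ℓ) → ℝ,
      (∀ (v : EuclideanSpace ℝ (Fin ℓ)) (lam : ℝ), 0 < lam →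
        Φ (lam • v) = lam ^ p * Φ v) →
      (∀ v w : EuclideanSpace ℝ (Fin ℓ), ‖v‖ = 1 → ‖w‖ = 1 →
        |Φ v - Φ w| ≤ L * ‖v - w‖) →
      (∀ v : EuclideanSpace ℝ (Fin ℓ), ‖v‖ = 1 → |Φ v| ≤ M) →
      ∀ a b : EuclideanSpace ℝ (Fin ℓ),
        |Φ (a + b) - Φ a - Φ b| ≤ C * Mfun p ‖a‖ ‖b‖ := by
  set K := p * 2 ^ (p - 1) * |M| + 2 * |L| + |M| with hKdef
  have hK0 : 0 ≤ K := by positivity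
  refine ⟨2 * K, ?_⟩
  intro Φ hhom hlip hbdd
  -- Φ vanishes at the origin
  have hΦ0 : Φ 0 = 0 := by
    have h := hhom 0 2 two_pos
    rw [smul_zero] at h
    have h2 : (1 : ℝ) < 2 ^ p := Real.one_lt_rpow (by norm_num) (by linarith)
    nlinarith [h]
  -- homogeneous representation
  have hrep : ∀ x : EuclideanSpace ℝ (Fin ℓ), x ≠ 0 →
      Φ x = ‖x‖ ^ p * Φ (‖x‖⁻¹ • x) ∧ ‖‖x‖⁻¹ • x‖ = 1 := by
    intro x hx
    have hn : 0 < ‖x‖ := norm_pos_iff.mpr hx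
    refine ⟨?_, ?_⟩
    · have h := hhom (‖x‖⁻¹ • x) ‖x‖ hn
      rw [smul_smul, mul_inv_cancel₀ hn.ne', one_smul] at h
      exact h
    · rw [norm_smul, Real.norm_eq_abs, abs_of_pos (inv_pos.mpr hn),
        inv_mul_cancel₀ hn.ne']
  have hone : (1 : ℝ) ≤ 2 ^ (p - 1) := Real.one_le_rpow (by norm_num) (by linarith)
  -- the bound on |Φ| by |M| on the sphere
  have hbdd' : ∀ v : EuclideanSpace ℝ (Fin ℓ), ‖v‖ = 1 → |Φ v| ≤ |M| :=
    fun v hv => (hbdd v hv).trans (le_abs_self M)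
  -- main estimate under the normalization ‖b‖ ≤ ‖a‖
  have main : ∀ a b : EuclideanSpace ℝ (Fin ℓ), ‖b‖ ≤ ‖a‖ →
      |Φ (a + b) - Φ a - Φ b| ≤ 2 * K * Mfun p ‖a‖ ‖b‖ := by
    intro a b hba
    rcases eq_or_ne b 0 with rfl | hb
    · simp only [add_zero, hΦ0, sub_zero, sub_self, abs_zero]
      exact mul_nonneg (by linarith) (stmt19_Mfun_nonneg (norm_nonneg a) (norm_nonneg 0))
    · have hs : 0 < ‖b‖ := norm_pos_iff.mpr hb
      have hr : 0 < ‖a‖ := lt_of_lt_of_le hs hba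
      have ha : a ≠ 0 := norm_pos_iff.mp hr
      obtain ⟨hbrep, hbu⟩ := hrep b hb
      obtain ⟨harep, hau⟩ := hrep a ha
      have hsp : ‖b‖ ^ p ≤ ‖a‖ ^ (p - 1) * ‖b‖ := by
        have e : ‖b‖ ^ p = ‖b‖ ^ (p - 1) * ‖b‖ := by
          rw [show p = p - 1 + 1 by ring, Real.rpow_add_one hs.ne']
          ring_nf
        have h5 : ‖b‖ ^ (p - 1) ≤ ‖a‖ ^ (p - 1) :=
          Real.rpow_le_rpow hs.le hba (by linarith)
        rw [e]
        exact mul_le_mul_of_nonneg_right h5 hs.le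
      have hΦb : |Φ b| ≤ |M| * (‖a‖ ^ (p - 1) * ‖b‖) := by
        rw [hbrep, abs_mul, abs_of_nonneg (Real.rpow_nonneg (norm_nonneg b) p)]
        calc ‖b‖ ^ p * |Φ (‖b‖⁻¹ • b)| ≤ ‖b‖ ^ p * |M| :=
              mul_le_mul_of_nonneg_left (hbdd' _ hbu)
                (Real.rpow_nonneg (norm_nonneg b) p)
          _ ≤ (‖a‖ ^ (p - 1) * ‖b‖) * |M| :=
              mul_le_mul_of_nonneg_right hsp (abs_nonneg M)
          _ = |M| * (‖a‖ ^ (p - 1) * ‖b‖) := by ring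
      have claim : |Φ (a + b) - Φ a - Φ b| ≤ K * (‖a‖ ^ (p - 1) * ‖b‖) := by
        rcases eq_or_ne (a + b) 0 with hab | hab
        · -- here b = -a and ‖b‖ = ‖a‖
          have hba' : ‖b‖ = ‖a‖ := by
            have : b = -a := by
              have := hab
              rw [add_comm] at this
              exact eq_neg_of_add_eq_zero_left this
            rw [this, norm_neg]
          have hΦa : |Φ a| ≤ |M| * (‖a‖ ^ (p - 1) * ‖b‖) := by
            rw [harep, abs_mul, abs_of_nonneg (Real.rpow_nonneg (norm_nonneg a) p)]
            have e : ‖a‖ ^ p = ‖a‖ ^ (p - 1) * ‖a‖ := by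
              rw [show p = p - 1 + 1 by ring, Real.rpow_add_one hr.ne']
              ring_nf
            calc ‖a‖ ^ p * |Φ (‖a‖⁻¹ • a)| ≤ ‖a‖ ^ p * |M| :=
                  mul_le_mul_of_nonneg_left (hbdd' _ hau)
                    (Real.rpow_nonneg (norm_nonneg a) p)
              _ = |M| * (‖a‖ ^ (p - 1) * ‖b‖) := by rw [e, hba']; ring
          rw [hab, hΦ0]
          have habs : |0 - Φ a - Φ b| ≤ |Φ a| + |Φ b| := by
            have := abs_add_le (-Φ a) (-Φ b)
            simp only [abs_neg] at this
            calc |0 - Φ a - Φ b| = |(-Φ a) + (-Φ b)| := by ring_nf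
              _ ≤ |Φ a| + |Φ b| := this
          have hK2 : 2 * |M| ≤ K := by nlinarith [abs_nonneg M, abs_nonneg L, hone, hp, mul_le_mul_of_nonneg_right hone (abs_nonneg M), mul_le_mul_of_nonneg_left (le_of_lt hp) (mul_nonneg (by linarith : (0:ℝ) ≤ 2 ^ (p-1)) (abs_nonneg M))]
          have hx : 0 ≤ ‖a‖ ^ (p - 1) * ‖b‖ :=
            mul_nonneg (Real.rpow_nonneg (norm_nonneg a) _) hs.le
          nlinarith [hΦa, hΦb, habs, mul_le_mul_of_nonneg_right hK2 hx]
        · have ht : 0 < ‖a + b‖ := norm_pos_iff.mpr hab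
          obtain ⟨htrep, htu⟩ := hrep (a + b) hab
          set u := ‖a + b‖⁻¹ • (a + b) with hu
          set v := ‖a‖⁻¹ • a with hv
          set w := ‖b‖⁻¹ • b with hw
          -- bound on the difference of powers
          have htr : |‖a + b‖ - ‖a‖| ≤ ‖b‖ := by
            have h6 := abs_norm_sub_norm_le (a + b) a
            rwa [add_sub_cancel_left] at h6
          have hts : ‖a + b‖ ≤ ‖a‖ + ‖b‖ := norm_add_le a b
          have h2r : ‖a‖ + ‖b‖ ≤ 2 * ‖a‖ := by linarith
          have hpow2 : (‖a‖ + ‖b‖) ^ (p - 1) ≤ 2 ^ (p - 1) * ‖a‖ ^ (p - 1) := by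
            calc (‖a‖ + ‖b‖) ^ (p - 1) ≤ (2 * ‖a‖) ^ (p - 1) :=
                  Real.rpow_le_rpow (by positivity) h2r (by linarith)
              _ = 2 ^ (p - 1) * ‖a‖ ^ (p - 1) :=
                  Real.mul_rpow (by norm_num) (norm_nonneg a)
          have h1 : |‖a + b‖ ^ p - ‖a‖ ^ p| ≤
              p * (2 ^ (p - 1) * ‖a‖ ^ (p - 1)) * ‖b‖ := by
            have habs' := abs_le.mp htr
            rcases le_total ‖a + b‖ ‖a‖ with hc | hc
            · have hmono : ‖a + b‖ ^ p ≤ ‖a‖ ^ p :=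
                Real.rpow_le_rpow ht.le hc (by linarith)
              have h7 := stmt19_rpow_diff_le hp.le ht.le hc
              rw [abs_of_nonpos (by linarith)]
              have h8 : ‖a‖ ^ (p - 1) ≤ 2 ^ (p - 1) * ‖a‖ ^ (p - 1) := by
                nlinarith [Real.rpow_nonneg (norm_nonneg a) (p - 1), hone]
              have h9 : p * ‖a‖ ^ (p - 1) * (‖a‖ - ‖a + b‖) ≤
                  p * (2 ^ (p - 1) * ‖a‖ ^ (p - 1)) * ‖b‖ :=
                mul_le_mul (mul_le_mul_of_nonneg_left h8 (by linarith))
                  (by linarith) (by linarith) (by positivity)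
              linarith
            · have hmono : ‖a‖ ^ p ≤ ‖a + b‖ ^ p :=
                Real.rpow_le_rpow hr.le hc (by linarith)
              have h7 := stmt19_rpow_diff_le hp.le hr.le hc
              rw [abs_of_nonneg (by linarith)]
              have h9' : ‖a + b‖ ^ (p - 1) ≤ 2 ^ (p - 1) * ‖a‖ ^ (p - 1) :=
                le_trans (Real.rpow_le_rpow ht.le hts (by linarith)) hpow2
              have h9 : p * ‖a + b‖ ^ (p - 1) * (‖a + b‖ - ‖a‖) ≤
                  p * (2 ^ (p - 1) * ‖a‖ ^ (p - 1)) * ‖b‖ :=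
                mul_le_mul (mul_le_mul_of_nonneg_left h9' (by linarith))
                  (by linarith) (by linarith) (by positivity)
              linarith
          -- Lipschitz bound on the sphere
          have huv : ‖u - v‖ ≤ 2 * ‖b‖ / ‖a‖ := by
            have hdecomp : u - v = (‖a + b‖⁻¹ - ‖a‖⁻¹) • (a + b) + ‖a‖⁻¹ • b := by
              rw [hu, hv, sub_smul, smul_add ‖a‖⁻¹ a b]
              abel
            calc ‖u - v‖ ≤ ‖(‖a + b‖⁻¹ - ‖a‖⁻¹) • (a + b)‖ + ‖‖a‖⁻¹ • b‖ := by
                  rw [hdecomp]; exact norm_add_le _ _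
              _ = |‖a + b‖⁻¹ - ‖a‖⁻¹| * ‖a + b‖ + ‖a‖⁻¹ * ‖b‖ := by
                  rw [norm_smul, norm_smul, Real.norm_eq_abs, Real.norm_eq_abs,
                    abs_of_pos (inv_pos.mpr hr)]
              _ ≤ 2 * ‖b‖ / ‖a‖ := by
                  have e : ‖a + b‖⁻¹ - ‖a‖⁻¹ = (‖a‖ - ‖a + b‖) / (‖a‖ * ‖a + b‖) := by
                    rw [inv_sub_inv ht.ne' hr.ne', mul_comm ‖a + b‖ ‖a‖]
                  rw [e, abs_div, abs_of_pos (mul_pos hr ht)]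
                  have h10 : |‖a‖ - ‖a + b‖| ≤ ‖b‖ := by
                    rw [abs_sub_comm]; exact htr
                  have e2 : |‖a‖ - ‖a + b‖| / (‖a‖ * ‖a + b‖) * ‖a + b‖ =
                      |‖a‖ - ‖a + b‖| / ‖a‖ := by
                    field_simp
                  rw [e2]
                  have h11 : |‖a‖ - ‖a + b‖| / ‖a‖ ≤ ‖b‖ / ‖a‖ :=
                    (div_le_div_iff_of_pos_right hr).mpr h10
                  have e3 : ‖a‖⁻¹ * ‖b‖ = ‖b‖ / ‖a‖ := by
                    rw [inv_mul_eq_div]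
                  have e4 : 2 * ‖b‖ / ‖a‖ = ‖b‖ / ‖a‖ + ‖b‖ / ‖a‖ := by ring
                  rw [e3, e4]
                  linarith
          have hlipuv : |Φ u - Φ v| ≤ |L| * (2 * ‖b‖ / ‖a‖) := by
            calc |Φ u - Φ v| ≤ L * ‖u - v‖ := hlip u v htu hau
              _ ≤ |L| * ‖u - v‖ :=
                  mul_le_mul_of_nonneg_right (le_abs_self L) (norm_nonneg _)
              _ ≤ |L| * (2 * ‖b‖ / ‖a‖) :=
                  mul_le_mul_of_nonneg_left huv (abs_nonneg L)
          -- assemble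
          have keyeq : Φ (a + b) - Φ a - Φ b =
              (‖a + b‖ ^ p - ‖a‖ ^ p) * Φ u + ‖a‖ ^ p * (Φ u - Φ v) + (- Φ b) := by
            rw [htrep, harep]
            ring
          have hT1 : |(‖a + b‖ ^ p - ‖a‖ ^ p) * Φ u| ≤
              (p * (2 ^ (p - 1) * ‖a‖ ^ (p - 1)) * ‖b‖) * |M| := by
            rw [abs_mul]
            exact mul_le_mul h1 (hbdd' u htu) (abs_nonneg _)
              (by positivity)
          have hT2 : |‖a‖ ^ p * (Φ u - Φ v)| ≤ 2 * |L| * (‖a‖ ^ (p - 1) * ‖b‖) := by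
            rw [abs_mul, abs_of_nonneg (Real.rpow_nonneg (norm_nonneg a) p)]
            have e : ‖a‖ ^ p = ‖a‖ ^ (p - 1) * ‖a‖ := by
              rw [show p = p - 1 + 1 by ring, Real.rpow_add_one hr.ne']
              ring_nf
            calc ‖a‖ ^ p * |Φ u - Φ v| ≤ ‖a‖ ^ p * (|L| * (2 * ‖b‖ / ‖a‖)) :=
                  mul_le_mul_of_nonneg_left hlipuv (Real.rpow_nonneg (norm_nonneg a) p)
              _ = 2 * |L| * (‖a‖ ^ (p - 1) * ‖b‖) := by
                  rw [e]; field_simp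
          calc |Φ (a + b) - Φ a - Φ b|
              ≤ |(‖a + b‖ ^ p - ‖a‖ ^ p) * Φ u| + |‖a‖ ^ p * (Φ u - Φ v)| + |(-Φ b)| := by
                rw [keyeq]; exact abs_add_three _ _ _
            _ ≤ (p * (2 ^ (p - 1) * ‖a‖ ^ (p - 1)) * ‖b‖) * |M|
                + 2 * |L| * (‖a‖ ^ (p - 1) * ‖b‖) + |M| * (‖a‖ ^ (p - 1) * ‖b‖) := by
                rw [abs_neg]
                exact add_le_add (add_le_add hT1 hT2) hΦb
            _ = K * (‖a‖ ^ (p - 1) * ‖b‖) := by rw [hKdef]; ring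
      calc |Φ (a + b) - Φ a - Φ b| ≤ K * (‖a‖ ^ (p - 1) * ‖b‖) := claim
        _ ≤ K * (2 * Mfun p ‖a‖ ‖b‖) :=
            mul_le_mul_of_nonneg_left (stmt19_key_bound hp hs.le hba) hK0
        _ = 2 * K * Mfun p ‖a‖ ‖b‖ := by ring
  intro a b
  rcases le_total ‖b‖ ‖a‖ with h | h
  · exact main a b h
  · have h2 := main b a h
    rw [add_comm b a, stmt19_Mfun_symm] at h2
    have e : Φ (a + b) - Φ a - Φ b = Φ (a + b) - Φ b - Φ a := by ring
    rw [e]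
    exact h2
end
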